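/- arXiv:1611.07843 — 2 statements merged into one kernel-verified Lean document; each statement's English description precedes it below -/
import Mathlib

section
/- Let γ > 0 with γ ≠ 1. Define t̃ = (1−γ)T − γσ²/ν₀², and define the interval I = [0,T] if t̃ < 0 (which holds exactly when γ > 1, or when γ < 1 and σ²/ν₀² > ((1−γ)/γ)T), and I = (t̃,T] otherwise. Define on I: a(t) = (γ/2)·log(γg(t)/((γ−1)g(t) + g(T))) + (1/2)·log(g(T)/g(t)) and b(t) = ((1−γ)/σ²)·(1/g(t))·(g(t)−g(T))/((γ−1)g(t) + g(T)). Then for all t ∈ I one has (γ−1)g(t) + g(T) > 0 (so a and b are well defined), a and b are C¹ on I, and they satisfy the system of ODEs a′(t) + (1/2)σ²g(t)²b(t) = 0 and b′(t) + (1/γ)σ²g(t)²b(t)² + ((1−γ)/γ)(1/σ²) + 2((1−γ)/γ)g(t)b(t) = 0 on I, with terminal conditions a(T) = 0 and b(T) = 0. -/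
/-!
With `c = σ²/ν₀²` one has `g t = (c + t)⁻¹`, so `g' = -g²`, and `a`, `b` depend on `t` only
through `g t` and `G = g T`. The ODE system is then a chain-rule computation that holds for any
solution of `g' = -g²`, and the terminal conditions are the evaluation at `g t = G`. The common
denominator is `(γ - 1) g t + g T = ν₀⁴ (t - t̃) / ((σ² + ν₀² t) (σ² + ν₀² T))`, positive exactly
for `t > t̃`; this is where `t̃` and the interval `I` come from.
-/

noncomputable section

open Set

theorem hasDerivAt_div_affine (p q t : ℝ) (h : p + q * t ≠ 0) :
    HasDerivAt (fun s => q / (p + q * s)) (-(q / (p + q * t)) ^ 2) t := by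
  have hd : HasDerivAt (fun s => p + q * s) q t := by
    simpa using ((hasDerivAt_id t).const_mul q).const_add p
  refine ((hasDerivAt_const t q).fun_div hd h).congr_deriv ?_
  field_simp
  ring

theorem sub_one_mul_div_add_div_eq (p q γ t T : ℝ) (hq : q ≠ 0) (ht : p + q * t ≠ 0)
    (hT : p + q * T ≠ 0) :
    (γ - 1) * (q / (p + q * t)) + q / (p + q * T)
      = q ^ 2 * (t - ((1 - γ) * T - γ * p / q)) / ((p + q * t) * (p + q * T)) := by
  field_simp
  ring

theorem one_sub_mul_sub_mul_neg_iff {T c γ : ℝ} (hT : 0 < T) (hc : 0 ≤ c) (hγ : 0 < γ)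
    (hγ1 : γ ≠ 1) :
    (1 - γ) * T - γ * c < 0 ↔ 1 < γ ∨ (γ < 1 ∧ c > (1 - γ) / γ * T) := by
  rw [gt_iff_lt, div_mul_eq_mul_div, div_lt_iff₀ hγ]
  rcases hγ1.lt_or_gt with h | h
  · simp only [h, true_and, not_lt_of_gt h, false_or]
    constructor <;> intro <;> linarith
  · simp only [h, true_or, iff_true, not_lt_of_gt h]
    nlinarith

theorem lt_and_nonneg_of_mem_ite {s t T : ℝ} (h : t ∈ if s < 0 then Icc 0 T else Ioc s T) :
    s < t ∧ 0 ≤ t := by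
  split_ifs at h with hs
  · exact ⟨hs.trans_le h.1, h.1⟩
  · exact ⟨h.1, (not_lt.mp hs).trans h.1.le⟩

/-- The paper's `a` and `b` are `a t = coeffA γ (g T) (g t)` and `b t = coeffB γ σ (g T) (g t)`. -/
def coeffA (γ G x : ℝ) : ℝ :=
  (γ/2) * Real.log (γ * x / ((γ-1) * x + G)) + (1/2) * Real.log (G / x)

def coeffB (γ σ G x : ℝ) : ℝ :=
  ((1-γ)/σ^2) * (1/x) * (x - G) / ((γ-1) * x + G)

section Riccati

variable {γ σ G t : ℝ} {g : ℝ → ℝ}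

theorem hasDerivAt_coeffA_comp (hg : HasDerivAt g (-g t ^ 2) t) (hγ : γ ≠ 0) (hσ : σ ≠ 0)
    (hG : G ≠ 0) (hx : g t ≠ 0) (hD : (γ-1) * g t + G ≠ 0) :
    HasDerivAt (fun s => coeffA γ G (g s)) (-((1/2) * σ^2 * g t ^ 2 * coeffB γ σ G (g t))) t := by
  have hlog₁ := ((hg.const_mul γ).fun_div ((hg.const_mul (γ-1)).add_const G) hD).log
    (div_ne_zero (mul_ne_zero hγ hx) hD)
  have hlog₂ := ((hasDerivAt_const t G).fun_div hg hx).log (div_ne_zero hG hx)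
  refine ((hlog₁.const_mul (γ/2)).add (hlog₂.const_mul (1/2))).congr_deriv ?_
  simp only [coeffB]
  -- `field_simp` only recognises the denominator as nonzero in this orientation
  rw [mul_comm] at hD
  field_simp
  ring

theorem hasDerivAt_coeffB_comp (hg : HasDerivAt g (-g t ^ 2) t) (hγ : γ ≠ 0) (hσ : σ ≠ 0)
    (hx : g t ≠ 0) (hD : (γ-1) * g t + G ≠ 0) :
    HasDerivAt (fun s => coeffB γ σ G (g s))
      (-((1/γ) * σ^2 * g t ^ 2 * coeffB γ σ G (g t) ^ 2 + ((1-γ)/γ) * (1/σ^2)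
        + 2 * ((1-γ)/γ) * g t * coeffB γ σ G (g t))) t := by
  have hnum := (((hasDerivAt_const t 1).fun_div hg hx).const_mul ((1-γ)/σ^2)).fun_mul
    (hg.sub_const G)
  refine (hnum.fun_div ((hg.const_mul (γ-1)).add_const G) hD).congr_deriv ?_
  simp only [coeffB]
  rw [mul_comm] at hD
  field_simp
  ring

end Riccati

theorem coeffA_self {γ G : ℝ} (hγ : γ ≠ 0) (hG : G ≠ 0) : coeffA γ G G = 0 := by
  have hD : (γ - 1) * G + G = γ * G := by ring
  simp [coeffA, hD, mul_ne_zero hγ hG, hG]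

theorem coeffB_self (γ σ G : ℝ) : coeffB γ σ G G = 0 := by
  simp [coeffB]

theorem stmt7
    (T σ ν₀ γ : ℝ) (hT : 0 < T) (hσ : 0 < σ) (hν : 0 < ν₀)
    (hγ : 0 < γ) (hγ1 : γ ≠ 1)
    (g : ℝ → ℝ) (hg : ∀ t, g t = ν₀^2 / (σ^2 + ν₀^2 * t))
    (ttil : ℝ) (httil : ttil = (1-γ) * T - γ * σ^2 / ν₀^2)
    (I : Set ℝ) (hI : I = if ttil < 0 then Icc (0:ℝ) T else Ioc ttil T)
    (a b : ℝ → ℝ)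
    (ha : ∀ t, a t = (γ/2) * Real.log (γ * g t / ((γ-1) * g t + g T))
                      + (1/2) * Real.log (g T / g t))
    (hb : ∀ t, b t = ((1-γ)/σ^2) * (1/(g t)) * (g t - g T) / ((γ-1) * g t + g T)) :
    -- characterization of the case t̃ < 0
    (ttil < 0 ↔ (1 < γ ∨ (γ < 1 ∧ σ^2/ν₀^2 > ((1-γ)/γ) * T)))
    ∧
    -- the denominators are positive on I (so a and b are well defined)
    (∀ t ∈ I, 0 < (γ-1) * g t + g T)
    ∧
    -- a and b are C¹ on I and satisfy the ODE system there
    (∀ t ∈ I,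
      HasDerivAt a (-((1/2) * σ^2 * (g t)^2 * b t)) t
      ∧ HasDerivAt b (-((1/γ) * σ^2 * (g t)^2 * (b t)^2 + ((1-γ)/γ) * (1/σ^2)
            + 2 * ((1-γ)/γ) * g t * b t)) t)
    ∧
    -- terminal conditions
    a T = 0 ∧ b T = 0 := by
  obtain rfl : a = fun t => coeffA γ (g T) (g t) := funext ha
  obtain rfl : b = fun t => coeffB γ σ (g T) (g t) := funext hb
  have haff : ∀ t, 0 ≤ t → 0 < σ^2 + ν₀^2 * t := fun t ht => by positivity
  have hgpos : ∀ t, 0 ≤ t → 0 < g t := fun t ht => hg t ▸ div_pos (by positivity) (haff t ht)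
  have hD : ∀ t ∈ I, 0 < (γ-1) * g t + g T := by
    intro t ht
    obtain ⟨htil, ht0⟩ := lt_and_nonneg_of_mem_ite (hI ▸ ht)
    rw [hg, hg, sub_one_mul_div_add_div_eq _ _ _ _ _ (by positivity) (haff t ht0).ne'
      (haff T hT.le).ne', ← httil]
    exact div_pos (mul_pos (by positivity) (sub_pos.mpr htil))
      (mul_pos (haff t ht0) (haff T hT.le))
  refine ⟨?_, hD, fun t ht => ?_, coeffA_self hγ.ne' (hgpos T hT.le).ne', coeffB_self γ σ (g T)⟩
  · rw [httil, mul_div_assoc]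
    exact one_sub_mul_sub_mul_neg_iff hT (by positivity) hγ hγ1
  · obtain ⟨-, ht0⟩ := lt_and_nonneg_of_mem_ite (hI ▸ ht)
    have hgt : HasDerivAt g (-g t ^ 2) t := by
      rw [funext hg]
      exact hasDerivAt_div_affine _ _ t (haff t ht0).ne'
    exact ⟨hasDerivAt_coeffA_comp hgt hγ.ne' hσ.ne' (hgpos T hT.le).ne' (hgpos t ht0).ne'
        (hD t ht).ne',
      hasDerivAt_coeffB_comp hgt hγ.ne' hσ.ne' (hgpos t ht0).ne' (hD t ht).ne'⟩
end
end

section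
/- Let γ > 0 with γ ≠ 1, and let t′ ∈ [0,T). Suppose a ∈ C¹([t′,T]) and B ∈ C¹([t′,T], S_d(ℝ)) (symmetric d×d matrix valued) satisfy the system a′(t) + (1/2)Tr(Γ_tΣ⁻¹Γ_t B(t)) = 0 and B′(t) + (1/γ)B(t)Γ_tΣ⁻¹Γ_tB(t) + ((1−γ)/γ)Σ⁻¹ + ((1−γ)/γ)Σ⁻¹Γ_tB(t) + ((1−γ)/γ)B(t)Γ_tΣ⁻¹ = 0 on [t′,T], with terminal conditions a(T) = 0 and B(T) = 0. Then the function φ(t,β) = a(t) + (1/2)(β−r·1⃗)ᵀB(t)(β−r·1⃗) satisfies, on [t′,T]×ℝ^d, the nonlinear PDE −(1/(1−γ))∂_tφ − (1/(2(1−γ)))Tr(Γ_tΣ⁻¹Γ_t ∂²_{ββ}φ) − (1/(2γ(1−γ)))(Γ_t∂_βφ)ᵀΣ⁻¹(Γ_t∂_βφ) − (1/(2γ))(β−r·1⃗)ᵀΣ⁻¹(β−r·1⃗) − (1/γ)(Γ_t∂_βφ)ᵀΣ⁻¹(β−r·1⃗) = 0 with terminal condition φ(T,β) = 0 for all β. 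-/
noncomputable section

open Set Matrix

/-- ∂ₜ for a function φ(t,β), β ∈ ℝ^d. -/
def mpdt {d : ℕ} (φ : ℝ → (Fin d → ℝ) → ℝ) (t : ℝ) (β : Fin d → ℝ) : ℝ :=
  deriv (fun s => φ s β) t
/-- Gradient in β of a function φ(t,β). -/
def mgrad {d : ℕ} (φ : ℝ → (Fin d → ℝ) → ℝ) (t : ℝ) (β : Fin d → ℝ) : Fin d → ℝ :=
  fun i => deriv (fun x => φ t (Function.update β i x)) (β i)
/-- Hessian in β of a function φ(t,β). -/
def mhess {d : ℕ} (φ : ℝ → (Fin d → ℝ) → ℝ) (t : ℝ) (β : Fin d → ℝ) :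
    Matrix (Fin d) (Fin d) ℝ :=
  Matrix.of fun i j => deriv (fun x => mgrad φ t (Function.update β j x) i) (β j)

/-- The vector β − r·1⃗. -/
def rsub {d : ℕ} (r : ℝ) (β : Fin d → ℝ) : Fin d → ℝ := fun i => β i - r

/-! For the quadratic ansatz φ = a + ½ (β − r1⃗)ᵀ B (β − r1⃗) with B symmetric, the gradient is
B (β − r1⃗), the Hessian is B and ∂ₜφ = a′ + ½ (β − r1⃗)ᵀ B′ (β − r1⃗). Substituting, and using the
symmetry of Σ⁻¹, Γₜ and B to write every term as a quadratic form in β − r1⃗, the PDE residual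
becomes −1/(1−γ) times the sum of the ODE for a and of the quadratic form of the Riccati ODE for B. -/

section Calculus

variable {𝕜 ι : Type*} [NontriviallyNormedField 𝕜] [Fintype ι] {t : 𝕜}

theorem HasDerivAt.dotProduct {u v : 𝕜 → ι → 𝕜} {u' v' : ι → 𝕜}
    (hu : HasDerivAt u u' t) (hv : HasDerivAt v v' t) :
    HasDerivAt (fun s => u s ⬝ᵥ v s) (u' ⬝ᵥ v t + u t ⬝ᵥ v') t := by
  have h := HasDerivAt.fun_sum (u := Finset.univ) fun i (_ : i ∈ Finset.univ) =>
    (hasDerivAt_pi.1 hu i).fun_mul (hasDerivAt_pi.1 hv i)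
  rwa [Finset.sum_add_distrib] at h

theorem HasDerivAt.mulVec {m : Type*} (M : Matrix m ι 𝕜) {v : 𝕜 → ι → 𝕜} {v' : ι → 𝕜}
    (hv : HasDerivAt v v' t) : HasDerivAt (fun s => M *ᵥ v s) (M *ᵥ v') t :=
  hasDerivAt_pi.2 fun i => by
    have h := (hasDerivAt_const t (M i)).dotProduct hv
    rw [zero_dotProduct, zero_add] at h
    exact h

theorem hasDerivAt_mulVec_of_entries {m : Type*} {B : 𝕜 → Matrix m ι 𝕜} {B' : Matrix m ι 𝕜}
    (hB : ∀ i j, HasDerivAt (fun s => B s i j) (B' i j) t) (x : ι → 𝕜) :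
    HasDerivAt (fun s => B s *ᵥ x) (B' *ᵥ x) t :=
  hasDerivAt_pi.2 fun i => by
    have h := (hasDerivAt_pi.2 (hB i)).dotProduct (hasDerivAt_const t x)
    rw [dotProduct_zero, add_zero] at h
    exact h

end Calculus

section QuadraticAnsatz

variable {d : ℕ} {φ : ℝ → (Fin d → ℝ) → ℝ} {t r : ℝ}

theorem hasDerivAt_rsub_update (β : Fin d → ℝ) (i : Fin d) (y : ℝ) :
    HasDerivAt (fun x => rsub r (Function.update β i x)) (Pi.single i 1) y :=
  (hasDerivAt_update β i y).sub_const (fun _ => r)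

theorem mgrad_eq_mulVec {c : ℝ} {M : Matrix (Fin d) (Fin d) ℝ} (hM : M.IsSymm)
    (hφ : ∀ β, φ t β = c + (1/2) * (rsub r β ⬝ᵥ M *ᵥ rsub r β)) (β : Fin d → ℝ) :
    mgrad φ t β = M *ᵥ rsub r β := by
  funext i
  have hv := hasDerivAt_rsub_update (r := r) β i (β i)
  have hq := hv.dotProduct (hv.mulVec M)
  rw [Function.update_eq_self] at hq
  rw [mgrad, funext fun x => hφ _, ((hq.const_mul (1/2)).const_add c).deriv, single_dotProduct,
    dotProduct_mulVec, dotProduct_single, ← mulVec_transpose, hM.eq]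
  ring

theorem mhess_eq_of_mgrad_eq {M : Matrix (Fin d) (Fin d) ℝ}
    (hg : ∀ β, mgrad φ t β = M *ᵥ rsub r β) (β : Fin d → ℝ) : mhess φ t β = M := by
  ext i j
  have h := hasDerivAt_pi.1 ((hasDerivAt_rsub_update (r := r) β j (β j)).mulVec M) i
  simp only [mhess, of_apply, hg, h.deriv, mulVec_single_one, col_apply]

theorem mpdt_eq {a : ℝ → ℝ} {B : ℝ → Matrix (Fin d) (Fin d) ℝ} {a₁ : ℝ}
    {B₁ : Matrix (Fin d) (Fin d) ℝ} {β x : Fin d → ℝ} (ha : HasDerivAt a a₁ t)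
    (hB : ∀ i j, HasDerivAt (fun s => B s i j) (B₁ i j) t)
    (hφ : ∀ s, φ s β = a s + (1/2) * (x ⬝ᵥ B s *ᵥ x)) :
    mpdt φ t β = a₁ + (1/2) * (x ⬝ᵥ B₁ *ᵥ x) := by
  have hq := (hasDerivAt_const t x).dotProduct (hasDerivAt_mulVec_of_entries hB x)
  rw [zero_dotProduct, zero_add] at hq
  rw [mpdt, funext hφ]
  exact (ha.add (hq.const_mul (1/2))).deriv

end QuadraticAnsatz

theorem dotProduct_mulVec_transpose {n R : Type*} [Fintype n] [CommSemiring R] (A : Matrix n n R)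
    (x : n → R) :
    x ⬝ᵥ Aᵀ *ᵥ x = x ⬝ᵥ A *ᵥ x := by
  rw [mulVec_transpose, dotProduct_mulVec, dotProduct_comm]

theorem hjb_residual_eq_zero_of_riccati {n : Type*} [Fintype n] {γ a₁ : ℝ} (hγ : γ ≠ 0)
    (hγ1 : γ ≠ 1) {S Γ B B₁ : Matrix n n ℝ} (hS : S.IsSymm) (hΓ : Γ.IsSymm) (hB : B.IsSymm)
    (hodea : a₁ + (1/2) * trace (Γ * S * Γ * B) = 0)
    (hodeB : B₁ + (1/γ) • (B * Γ * S * Γ * B) + ((1-γ)/γ) • S + ((1-γ)/γ) • (S * Γ * B)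
      + ((1-γ)/γ) • (B * Γ * S) = 0)
    (x : n → ℝ) :
    -(1/(1-γ)) * (a₁ + (1/2) * (x ⬝ᵥ B₁ *ᵥ x))
      - (1/(2*(1-γ))) * trace (Γ * S * Γ * B)
      - (1/(2*γ*(1-γ))) * (Γ *ᵥ (B *ᵥ x) ⬝ᵥ S *ᵥ (Γ *ᵥ (B *ᵥ x)))
      - (1/(2*γ)) * (x ⬝ᵥ S *ᵥ x)
      - (1/γ) * (Γ *ᵥ (B *ᵥ x) ⬝ᵥ S *ᵥ x) = 0 := by
  have hquad : x ⬝ᵥ B₁ *ᵥ x + (1/γ) * (x ⬝ᵥ (B * Γ * S * Γ * B) *ᵥ x)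
      + ((1-γ)/γ) * (x ⬝ᵥ S *ᵥ x) + ((1-γ)/γ) * (x ⬝ᵥ (S * Γ * B) *ᵥ x)
      + ((1-γ)/γ) * (x ⬝ᵥ (B * Γ * S) *ᵥ x) = 0 := by
    simpa only [add_mulVec, smul_mulVec, dotProduct_add, dotProduct_smul, zero_mulVec,
      dotProduct_zero, smul_eq_mul] using congrArg (fun P => x ⬝ᵥ P *ᵥ x) hodeB
  have hΓSΓ : Γ *ᵥ (B *ᵥ x) ⬝ᵥ S *ᵥ (Γ *ᵥ (B *ᵥ x)) = x ⬝ᵥ (B * Γ * S * Γ * B) *ᵥ x := by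
    simp only [dotProduct_mulVec, mulVec_mulVec, ← mulVec_transpose,
      transpose_mul, hB.eq, hΓ.eq, Matrix.mul_assoc]
  have hΓS : Γ *ᵥ (B *ᵥ x) ⬝ᵥ S *ᵥ x = x ⬝ᵥ (B * Γ * S) *ᵥ x := by
    simp only [dotProduct_mulVec, mulVec_mulVec, ← mulVec_transpose,
      transpose_mul, hB.eq, hΓ.eq, Matrix.mul_assoc]
  have hSΓ : x ⬝ᵥ (S * Γ * B) *ᵥ x = x ⬝ᵥ (B * Γ * S) *ᵥ x := by
    rw [← dotProduct_mulVec_transpose (B * Γ * S)]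
    simp only [transpose_mul, hB.eq, hΓ.eq, hS.eq, Matrix.mul_assoc]
  rw [hΓSΓ, hΓS]
  rw [hSΓ] at hquad
  have h1γ : 1 - γ ≠ 0 := sub_ne_zero.2 (Ne.symm hγ1)
  linear_combination (norm := skip) (-(1/(1-γ))) * (hodea + (1/2) * hquad)
  field_simp
  ring

theorem stmt17_general
    (T r γ t' : ℝ) (hγ : 0 < γ) (hγ1 : γ ≠ 1)
    (d : ℕ)
    (Sm G0 : Matrix (Fin d) (Fin d) ℝ) (hSm : Sm.PosDef) (hG0 : G0.PosDef)
    (Γ : ℝ → Matrix (Fin d) (Fin d) ℝ)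
    (hΓ : ∀ t, Γ t = (G0⁻¹ + t • Sm⁻¹)⁻¹)
    (a a' : ℝ → ℝ) (B B' : ℝ → Matrix (Fin d) (Fin d) ℝ)
    -- a ∈ C¹([t',T]), B ∈ C¹([t',T], S_d(ℝ))
    (ha : ∀ t ∈ Icc t' T, HasDerivAt a (a' t) t)
    (hB : ∀ t ∈ Icc t' T, ∀ i j, HasDerivAt (fun s => B s i j) (B' t i j) t)
    (hBsymm : ∀ t ∈ Icc t' T, (B t).IsSymm)
    -- the system of ODEs
    (hodea : ∀ t ∈ Icc t' T,
      a' t + (1/2) * Matrix.trace (Γ t * Sm⁻¹ * Γ t * B t) = 0)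
    (hodeB : ∀ t ∈ Icc t' T,
      B' t + (1/γ) • (B t * Γ t * Sm⁻¹ * Γ t * B t)
        + ((1-γ)/γ) • Sm⁻¹
        + ((1-γ)/γ) • (Sm⁻¹ * Γ t * B t)
        + ((1-γ)/γ) • (B t * Γ t * Sm⁻¹) = 0)
    -- terminal conditions
    (haT : a T = 0) (hBT : B T = 0)
    (φ : ℝ → (Fin d → ℝ) → ℝ)
    (hφ : ∀ (t : ℝ) (β : Fin d → ℝ),
      φ t β = a t + (1/2) * (rsub r β ⬝ᵥ (B t).mulVec (rsub r β))) :
    (∀ t ∈ Icc t' T, ∀ β : Fin d → ℝ,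
      -(1/(1-γ)) * mpdt φ t β
        - (1/(2*(1-γ))) * Matrix.trace (Γ t * Sm⁻¹ * Γ t * mhess φ t β)
        - (1/(2*γ*(1-γ)))
            * ((Γ t).mulVec (mgrad φ t β) ⬝ᵥ Sm⁻¹.mulVec ((Γ t).mulVec (mgrad φ t β)))
        - (1/(2*γ)) * (rsub r β ⬝ᵥ Sm⁻¹.mulVec (rsub r β))
        - (1/γ) * ((Γ t).mulVec (mgrad φ t β) ⬝ᵥ Sm⁻¹.mulVec (rsub r β)) = 0)
    ∧ (∀ β : Fin d → ℝ, φ T β = 0) := by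
  have hS : Sm⁻¹.IsSymm := (isHermitian_iff_isSymm.1 hSm.isHermitian).inv
  have hΓsymm (t : ℝ) : (Γ t).IsSymm :=
    hΓ t ▸ ((isHermitian_iff_isSymm.1 hG0.isHermitian).inv.add (hS.smul t)).inv
  refine ⟨fun t ht β => ?_, fun β => by simp [hφ, haT, hBT]⟩
  have hgrad : ∀ β, mgrad φ t β = B t *ᵥ rsub r β := mgrad_eq_mulVec (hBsymm t ht) (hφ t)
  rw [mpdt_eq (ha t ht) (hB t ht) (fun s => hφ s β), mhess_eq_of_mgrad_eq hgrad, hgrad]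
  exact hjb_residual_eq_zero_of_riccati hγ.ne' hγ1 hS (hΓsymm t) (hBsymm t ht) (hodea t ht)
    (hodeB t ht) _

theorem stmt17
    (T r γ t' : ℝ) (hT : 0 < T) (hγ : 0 < γ) (hγ1 : γ ≠ 1) (ht' : t' ∈ Ico (0:ℝ) T)
    (d : ℕ) (hd : 1 ≤ d)
    (Sm G0 : Matrix (Fin d) (Fin d) ℝ) (hSm : Sm.PosDef) (hG0 : G0.PosDef)
    (Γ : ℝ → Matrix (Fin d) (Fin d) ℝ)
    (hΓ : ∀ t, Γ t = (G0⁻¹ + t • Sm⁻¹)⁻¹)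
    (a a' : ℝ → ℝ) (B B' : ℝ → Matrix (Fin d) (Fin d) ℝ)
    -- a ∈ C¹([t',T]), B ∈ C¹([t',T], S_d(ℝ))
    (ha : ∀ t ∈ Icc t' T, HasDerivAt a (a' t) t)
    (hB : ∀ t ∈ Icc t' T, ∀ i j, HasDerivAt (fun s => B s i j) (B' t i j) t)
    (ha' : ContinuousOn a' (Icc t' T))
    (hB' : ∀ i j, ContinuousOn (fun t => B' t i j) (Icc t' T))
    (hBsymm : ∀ t ∈ Icc t' T, (B t).IsSymm)
    -- the system of ODEs
    (hodea : ∀ t ∈ Icc t' T,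
      a' t + (1/2) * Matrix.trace (Γ t * Sm⁻¹ * Γ t * B t) = 0)
    (hodeB : ∀ t ∈ Icc t' T,
      B' t + (1/γ) • (B t * Γ t * Sm⁻¹ * Γ t * B t)
        + ((1-γ)/γ) • Sm⁻¹
        + ((1-γ)/γ) • (Sm⁻¹ * Γ t * B t)
        + ((1-γ)/γ) • (B t * Γ t * Sm⁻¹) = 0)
    -- terminal conditions
    (haT : a T = 0) (hBT : B T = 0)
    (φ : ℝ → (Fin d → ℝ) → ℝ)
    (hφ : ∀ (t : ℝ) (β : Fin d → ℝ),
      φ t β = a t + (1/2) * (rsub r β ⬝ᵥ (B t).mulVec (rsub r β))) :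
    (∀ t ∈ Icc t' T, ∀ β : Fin d → ℝ,
      -(1/(1-γ)) * mpdt φ t β
        - (1/(2*(1-γ))) * Matrix.trace (Γ t * Sm⁻¹ * Γ t * mhess φ t β)
        - (1/(2*γ*(1-γ)))
            * ((Γ t).mulVec (mgrad φ t β) ⬝ᵥ Sm⁻¹.mulVec ((Γ t).mulVec (mgrad φ t β)))
        - (1/(2*γ)) * (rsub r β ⬝ᵥ Sm⁻¹.mulVec (rsub r β))
        - (1/γ) * ((Γ t).mulVec (mgrad φ t β) ⬝ᵥ Sm⁻¹.mulVec (rsub r β)) = 0)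
    ∧ (∀ β : Fin d → ℝ, φ T β = 0) :=
  stmt17_general T r γ t' hγ hγ1 d Sm G0 hSm hG0 Γ hΓ a a' B B' ha hB hBsymm hodea hodeB haT hBT φ
    hφ
end
end
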